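/- Let λ ≥ 1 and let (b_j) be an infinite λ-triangular sequence in a real Banach space. Then for every ε > 0, (b_j) has a subsequence which is ((λ² + 1)/2 + ε)-wide-(s). -/

import Mathlib

open Finset Filter Metric NormedSpace
open Topology

noncomputable section

universe u

variable {X Y : Type*} [NormedAddCommGroup X] [NormedSpace ℝ X]
  [NormedAddCommGroup Y] [NormedSpace ℝ Y]

/-- `b` is a `lam`-basic sequence: for all scalars `c` and all `k ≤ n`,
`‖∑_{j<k} c_j b_j‖ ≤ lam * ‖∑_{j<n} c_j b_j‖`. -/
def IsBasicWith (lam : ℝ) (b : ℕ → X) : Prop :=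
  ∀ (c : ℕ → ℝ) (k n : ℕ), k ≤ n →
    ‖∑ j ∈ Finset.range k, c j • b j‖ ≤ lam * ‖∑ j ∈ Finset.range n, c j • b j‖

/-- `b` is a `lam`-wide-(s) sequence: it is `2lam`-basic, `‖b j‖ ≤ lam` for all `j`,
and `|∑_{k≤j<n} c_j| ≤ lam * ‖∑_{j<n} c_j b_j‖` for all scalars and `k ≤ n`. -/
def IsWideSWith (lam : ℝ) (b : ℕ → X) : Prop :=
  IsBasicWith (2 * lam) b ∧ (∀ j, ‖b j‖ ≤ lam) ∧
    ∀ (c : ℕ → ℝ) (k n : ℕ), k ≤ n →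
      |∑ j ∈ Finset.Ico k n, c j| ≤ lam * ‖∑ j ∈ Finset.range n, c j • b j‖

/-- `b` is a `lam`-triangular (infinite) sequence. -/
def IsTriangularWith (lam : ℝ) (b : ℕ → X) : Prop :=
  ∃ f : ℕ → StrongDual ℝ X,
    (∀ i j, i ≤ j → f i (b j) = 1) ∧ (∀ i j, j < i → f i (b j) = 0) ∧
      (∀ j, ‖f j‖ ≤ lam) ∧ (∀ j, ‖b j‖ ≤ lam)

/-- Auxiliary product estimate. -/
lemma wideS_prod_bound {c : ℝ} (hc0 : 0 ≤ c) (hc : c ≤ 1/2) (k : ℕ) :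
    ∀ n, k ≤ n → (∏ m ∈ Finset.Ico k n, (1 + c * (1/2:ℝ)^(m+1)))
      ≤ 1 + 2*c*((1/2:ℝ)^k - (1/2:ℝ)^n) := by
  intro n hn
  induction n, hn using Nat.le_induction with
  | base => simp
  | succ n hn ih =>
    rw [Finset.prod_Ico_succ_top hn]
    have hq : (0:ℝ) < (1/2:ℝ)^n := by positivity
    have hpq : ((1/2:ℝ))^n ≤ (1/2:ℝ)^k := pow_le_pow_of_le_one (by norm_num) (by norm_num) hn
    have hp1 : ((1/2:ℝ))^k ≤ 1 := pow_le_one₀ (by norm_num) (by norm_num)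
    have hfac : (0:ℝ) ≤ 1 + c * (1/2:ℝ)^(n+1) := by positivity
    have h2 : c * ((1/2:ℝ)^k - (1/2:ℝ)^n) ≤ 1/2 := by nlinarith
    calc (∏ m ∈ Finset.Ico k n, (1 + c * (1/2:ℝ)^(m+1))) * (1 + c * (1/2:ℝ)^(n+1))
        ≤ (1 + 2*c*((1/2:ℝ)^k - (1/2:ℝ)^n)) * (1 + c * (1/2:ℝ)^(n+1)) :=
          mul_le_mul_of_nonneg_right ih hfac
      _ ≤ 1 + 2*c*((1/2:ℝ)^k - (1/2:ℝ)^(n+1)) := by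
          rw [pow_succ]
          nlinarith [mul_nonneg hc0 hq.le]

set_option maxHeartbeats 1000000 in
lemma wideS_mazur_step {W : Type u} [NormedAddCommGroup W] [NormedSpace ℝ W]
    (e : ℕ → StrongDual ℝ W) (lam : ℝ) (hlam : 1 ≤ lam)
    (helow : ∀ j, 1 ≤ lam * ‖e j‖)
    (hcl : ∀ Ψ : Set W, Ψ.Finite → ∀ δ : ℝ, 0 < δ → ∀ N : ℕ,
      ∃ j, N ≤ j ∧ ∀ ψ ∈ Ψ, |e j ψ| < δ)
    (V : Submodule ℝ (StrongDual ℝ W)) (hV : FiniteDimensional ℝ V)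
    (δ : ℝ) (hδ0 : 0 < δ) (hδ1 : δ ≤ 1) (N : ℕ) :
    ∃ j, N ≤ j ∧ ∀ v ∈ V, ∀ t : ℝ, ‖v‖ ≤ (1 + δ) * ‖v + t • e j‖ := by
  have hlam0 : (0:ℝ) < lam := lt_of_lt_of_le one_pos hlam
  haveI := hV
  set S : Set (StrongDual ℝ W) := (Subtype.val) '' (sphere (0 : V) 1) with hS
  have hScomp : IsCompact S := (isCompact_sphere (0:V) 1).image continuous_subtype_val
  have hcov : S ⊆ ⋃ v ∈ S, ball v (δ/8) := fun v hv =>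
    Set.mem_biUnion hv (mem_ball_self (by positivity))
  obtain ⟨D, hDS, hDfin, hDcov⟩ :=
    hScomp.elim_finite_subcover_image (fun v _ => isOpen_ball) hcov
  have hSnorm : ∀ v ∈ S, ‖v‖ = 1 := by
    rintro v ⟨u, hu, rfl⟩
    simpa [Metric.mem_sphere, Subtype.dist_eq] using hu
  have hnorming : ∀ v ∈ D, ∃ ψ : W, ‖ψ‖ ≤ 1 ∧ 1 - δ/8 < v ψ := by
    intro v hvD
    have hv1 : ‖v‖ = 1 := hSnorm v (hDS hvD)
    have hlt : (1 - δ/8 : ℝ) < ‖v‖ := by rw [hv1]; linarith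
    obtain ⟨ψ, hψ, hψ2⟩ := v.exists_lt_apply_of_lt_opNorm hlt
    rcases le_or_gt 0 (v ψ) with h | h
    · exact ⟨ψ, hψ.le, by rwa [Real.norm_eq_abs, abs_of_nonneg h] at hψ2⟩
    · refine ⟨-ψ, (norm_neg ψ) ▸ hψ.le, ?_⟩
      rw [map_neg]
      rwa [Real.norm_eq_abs, abs_of_neg h] at hψ2
  choose! φ hφ1 hφ2 using hnorming
  obtain ⟨j, hjN, hj⟩ := hcl (φ '' D) (hDfin.image φ) (δ/(8*lam)) (by positivity) N
  refine ⟨j, hjN, ?_⟩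
  have key : ∀ u ∈ V, ‖u‖ = 1 → ∀ t : ℝ, 1 ≤ (1 + δ) * ‖u + t • e j‖ := by
    intro u huV hu1 t
    rcases le_or_gt 2 (|t| * ‖e j‖) with hbig | hsmall
    · have h1 : ‖t • e j‖ ≤ ‖u + t • e j‖ + ‖u‖ := by
        calc ‖t • e j‖ = ‖(u + t • e j) - u‖ := by rw [add_sub_cancel_left]
          _ ≤ ‖u + t • e j‖ + ‖u‖ := norm_sub_le _ _
      rw [norm_smul, Real.norm_eq_abs] at h1
      nlinarith
    · have ht2 : |t| ≤ 2 * lam := by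
        have h1 : |t| * 1 ≤ |t| * (lam * ‖e j‖) :=
          mul_le_mul_of_nonneg_left (helow j) (abs_nonneg t)
        have h2 : lam * (|t| * ‖e j‖) ≤ lam * 2 := mul_le_mul_of_nonneg_left hsmall.le hlam0.le
        nlinarith
      have huS : u ∈ S := ⟨⟨u, huV⟩, by simpa [Metric.mem_sphere, Subtype.dist_eq] using hu1, rfl⟩
      obtain ⟨v₀, hv₀D, hball⟩ := Set.mem_iUnion₂.1 (hDcov huS)
      have hdist : ‖u - v₀‖ < δ/8 := by rwa [mem_ball, dist_eq_norm] at hball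
      have hψn : ‖φ v₀‖ ≤ 1 := hφ1 v₀ hv₀D
      have hψv : 1 - δ/8 < v₀ (φ v₀) := hφ2 v₀ hv₀D
      have hψe : |e j (φ v₀)| < δ/(8*lam) := hj (φ v₀) ⟨v₀, hv₀D, rfl⟩
      have hb1 : |(u - v₀) (φ v₀)| ≤ δ/8 := by
        have := (u - v₀).le_opNorm (φ v₀)
        rw [Real.norm_eq_abs] at this
        nlinarith [norm_nonneg (u - v₀), abs_nonneg ((u - v₀) (φ v₀))]
      have hb2 : |t * e j (φ v₀)| ≤ δ/4 := by
        rw [abs_mul]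
        have h3 : |t| * |e j (φ v₀)| ≤ (2*lam) * (δ/(8*lam)) :=
          mul_le_mul ht2 hψe.le (abs_nonneg _) (by positivity)
        have h4 : (2*lam) * (δ/(8*lam)) = δ/4 := by field_simp; ring
        linarith [h3, h4.le]
      have happ : (u + t • e j) (φ v₀) = v₀ (φ v₀) + (u - v₀) (φ v₀) + t * (e j (φ v₀)) := by
        simp [ContinuousLinearMap.add_apply, ContinuousLinearMap.smul_apply,
          ContinuousLinearMap.sub_apply, smul_eq_mul]
      have hlow : 1 - δ/2 ≤ (u + t • e j) (φ v₀) := by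
        rw [happ]
        have := neg_abs_le ((u - v₀) (φ v₀))
        have := neg_abs_le (t * e j (φ v₀))
        linarith
      have hup : (u + t • e j) (φ v₀) ≤ ‖u + t • e j‖ := by
        have h5 := (u + t • e j).le_opNorm (φ v₀)
        rw [Real.norm_eq_abs] at h5
        have h6 := le_abs_self ((u + t • e j) (φ v₀))
        nlinarith [norm_nonneg (u + t • e j)]
      nlinarith
  intro v hvV t
  by_cases hv0 : v = 0
  · subst hv0
    simp only [norm_zero]
    positivity
  · have hr : 0 < ‖v‖ := norm_pos_iff.2 hv0
    have hu1 : ‖(‖v‖⁻¹ : ℝ) • v‖ = 1 := by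
      rw [norm_smul, Real.norm_eq_abs, abs_of_nonneg (inv_nonneg.2 hr.le),
        inv_mul_cancel₀ hr.ne']
    have hkey := key ((‖v‖⁻¹ : ℝ) • v) (V.smul_mem _ hvV) hu1 (‖v‖⁻¹ * t)
    have h2 : (‖v‖⁻¹ : ℝ) • v + (‖v‖⁻¹ * t) • e j = (‖v‖⁻¹ : ℝ) • (v + t • e j) := by
      rw [smul_add, mul_smul]
    rw [h2, norm_smul, Real.norm_eq_abs, abs_of_nonneg (inv_nonneg.2 hr.le)] at hkey
    have h3 : ‖v‖ * (‖v‖⁻¹ * ‖v + t • e j‖) = ‖v + t • e j‖ := by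
      field_simp
    calc ‖v‖ = ‖v‖ * 1 := (mul_one _).symm
      _ ≤ ‖v‖ * ((1 + δ) * (‖v‖⁻¹ * ‖v + t • e j‖)) := mul_le_mul_of_nonneg_left hkey hr.le
      _ = (1 + δ) * (‖v‖ * (‖v‖⁻¹ * ‖v + t • e j‖)) := by ring
      _ = (1 + δ) * ‖v + t • e j‖ := by rw [h3]

set_option maxHeartbeats 4000000

/-- an infinite `lam`-triangular sequence has, for every `ε > 0`,
a `((lam² + 1)/2 + ε)`-wide-(s) subsequence. -/
theorem stmt_15 [CompleteSpace X] (lam : ℝ) (hlam : 1 ≤ lam) (b : ℕ → X)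
    (hb : IsTriangularWith lam b) (ε : ℝ) (hε : 0 < ε) :
    ∃ s : ℕ → ℕ, StrictMono s ∧
      IsWideSWith ((lam ^ 2 + 1) / 2 + ε) (fun j => b (s j)) := by
  classical
  letI : NormedAddCommGroup (StrongDual ℝ (StrongDual ℝ X)) := inferInstance
  letI : NormedSpace ℝ (StrongDual ℝ (StrongDual ℝ X)) := inferInstance
  obtain ⟨f, hf1, hf0, hfn, hbn⟩ := hb
  have hlam0 : (0:ℝ) < lam := lt_of_lt_of_le one_pos hlam
  -- an ultrafilter extending `atTop`
  let U : Ultrafilter ℕ := Ultrafilter.of atTop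
  have hU : (U : Filter ℕ) ≤ atTop := Ultrafilter.of_le _
  have hconv : ∀ w : StrongDual ℝ X, ∃ a : ℝ, Tendsto (fun j => w (b j)) (U : Filter ℕ) (𝓝 a) := by
    intro w
    have hmem : ∀ j, w (b j) ∈ Set.Icc (-(‖w‖ * lam)) (‖w‖ * lam) := by
      intro j
      have h1 : |w (b j)| ≤ ‖w‖ * lam := by
        have h2 := w.le_opNorm (b j)
        rw [Real.norm_eq_abs] at h2
        nlinarith [norm_nonneg w, hbn j, norm_nonneg (b j)]
      rw [Set.mem_Icc]
      constructor
      · linarith [(abs_le.1 h1).1]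
      · exact (abs_le.1 h1).2
    obtain ⟨a, -, ha⟩ := (isCompact_Icc (a := -(‖w‖*lam)) (b := ‖w‖*lam)).ultrafilter_le_nhds
      (U.map (fun j => w (b j))) (by
        rw [Ultrafilter.coe_map, le_principal_iff, Filter.mem_map]
        exact Filter.univ_mem' hmem)
    rw [Ultrafilter.coe_map] at ha
    exact ⟨a, ha⟩
  let βf : StrongDual ℝ X → ℝ := fun w => limUnder (U : Filter ℕ) (fun j => w (b j))
  have htd : ∀ w : StrongDual ℝ X, Tendsto (fun j => w (b j)) (U : Filter ℕ) (𝓝 (βf w)) := fun w =>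
    tendsto_nhds_limUnder (hconv w)
  have hβadd : ∀ w₁ w₂, βf (w₁ + w₂) = βf w₁ + βf w₂ := by
    intro w₁ w₂
    refine tendsto_nhds_unique (htd (w₁ + w₂)) ?_
    have h1 := (htd w₁).add (htd w₂)
    simpa using h1
  have hβsmul : ∀ (r : ℝ) (w : StrongDual ℝ X), βf (r • w) = r * βf w := by
    intro r w
    refine tendsto_nhds_unique (htd (r • w)) ?_
    have h1 := (htd w).const_mul r
    simpa [smul_eq_mul] using h1
  have hβbd : ∀ w : StrongDual ℝ X, ‖βf w‖ ≤ lam * ‖w‖ := by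
    intro w
    rw [Real.norm_eq_abs]
    have h1 : Tendsto (fun j => |w (b j)|) (U : Filter ℕ) (𝓝 |βf w|) := (htd w).abs
    refine le_of_tendsto h1 (Filter.Eventually.of_forall fun j => ?_)
    have h2 := w.le_opNorm (b j)
    rw [Real.norm_eq_abs] at h2
    nlinarith [norm_nonneg w, hbn j, norm_nonneg (b j)]
  let βl : StrongDual ℝ X →ₗ[ℝ] ℝ :=
    { toFun := βf
      map_add' := hβadd
      map_smul' := fun r w => hβsmul r w }
  let β : StrongDual ℝ (StrongDual ℝ X) := LinearMap.mkContinuous βl lam hβbd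
  have hβapp : ∀ w, β w = βf w := fun _ => rfl
  have hβnorm : ‖β‖ ≤ lam := LinearMap.mkContinuous_norm_le _ hlam0.le _
  have hβ1 : ∀ i, β (f i) = 1 := by
    intro i
    rw [hβapp]
    refine tendsto_nhds_unique (htd (f i)) ?_
    have hev : ∀ᶠ j in (U : Filter ℕ), f i (b j) = 1 := by
      have h1 : ∀ᶠ j in (atTop : Filter ℕ), f i (b j) = 1 :=
        (eventually_ge_atTop i).mono fun j hj => hf1 i j hj
      exact h1.filter_mono hU
    exact Tendsto.congr' (hev.mono fun j hj => hj.symm) tendsto_const_nhds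
  let J := NormedSpace.inclusionInDoubleDualLi ℝ (E := X)
  let e : ℕ → StrongDual ℝ (StrongDual ℝ X) := fun j => J (b j) - β
  have heapp : ∀ (j : ℕ) (w : StrongDual ℝ X), e j w = w (b j) - β w := fun j w => rfl
  have helow : ∀ j, 1 ≤ lam * ‖e j‖ := by
    intro j
    have h1 : e j (f (j+1)) = -1 := by
      rw [heapp, hf0 (j+1) j (Nat.lt_succ_self j), hβ1]
      ring
    have h2 : |e j (f (j+1))| ≤ ‖e j‖ * ‖f (j+1)‖ := by
      have h3 := (e j).le_opNorm (f (j+1))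
      rwa [Real.norm_eq_abs] at h3
    rw [h1] at h2
    have h3 : ‖f (j+1)‖ ≤ lam := hfn _
    have h4 := norm_nonneg (e j)
    rw [abs_neg, abs_one] at h2
    nlinarith
  have hcl : ∀ Ψ : Set (StrongDual ℝ X), Ψ.Finite → ∀ δ : ℝ, 0 < δ → ∀ N : ℕ,
      ∃ j, N ≤ j ∧ ∀ ψ ∈ Ψ, |e j ψ| < δ := by
    intro Ψ hΨ δ hδ N
    have h1 : ∀ᶠ j in (U : Filter ℕ), N ≤ j := (eventually_ge_atTop N).filter_mono hU
    have h2 : ∀ᶠ j in (U : Filter ℕ), ∀ ψ ∈ Ψ, |e j ψ| < δ := by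
      rw [eventually_all_finite hΨ]
      intro ψ hψ
      have h3 : Tendsto (fun j => e j ψ) (U : Filter ℕ) (𝓝 0) := by
        have h4 : Tendsto (fun j => ψ (b j) - β ψ) (U : Filter ℕ) (𝓝 (βf ψ - β ψ)) :=
          (htd ψ).sub tendsto_const_nhds
        rw [hβapp, sub_self] at h4
        exact h4.congr fun j => (heapp j ψ).symm
      have h5 := Metric.tendsto_nhds.1 h3 δ hδ
      exact h5.mono fun j hj => by rwa [Real.dist_eq, sub_zero] at hj
    exact (h1.and h2).exists
  -- the perturbation parameters
  set c : ℝ := min ε (1/2) with hcdef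
  have hc0 : 0 < c := lt_min hε one_half_pos
  have hc2 : c ≤ 1/2 := min_le_right _ _
  have hcε : c ≤ ε := min_le_left _ _
  let δs : ℕ → ℝ := fun m => c * (1/2:ℝ)^(m+1)
  have hδ0 : ∀ m, 0 < δs m := fun m => mul_pos hc0 (by positivity)
  have hδ1 : ∀ m, δs m ≤ 1 := by
    intro m
    have h1 : (1/2:ℝ)^(m+1) ≤ 1 := pow_le_one₀ (by norm_num) (by norm_num)
    have h2 : c * (1/2:ℝ)^(m+1) ≤ c * 1 := mul_le_mul_of_nonneg_left h1 hc0.le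
    simp only [δs]
    nlinarith
  have hstep := wideS_mazur_step e lam hlam helow hcl
  -- recursive construction of the subsequence
  let T : ℕ → {p : ℕ × Submodule ℝ (StrongDual ℝ (StrongDual ℝ X)) // FiniteDimensional ℝ p.2} :=
    fun k => Nat.rec
      ⟨((hstep (Submodule.span ℝ {β}) inferInstance (δs 0) (hδ0 0) (hδ1 0) 0).choose,
        (Submodule.span ℝ {β}) ⊔ (Submodule.span ℝ
          {e ((hstep (Submodule.span ℝ {β}) inferInstance (δs 0) (hδ0 0) (hδ1 0) 0).choose)})),
        inferInstance⟩
      (fun m p =>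
        ⟨((hstep p.1.2 p.2 (δs (m+1)) (hδ0 _) (hδ1 _) (p.1.1+1)).choose,
          p.1.2 ⊔ (Submodule.span ℝ
            {e ((hstep p.1.2 p.2 (δs (m+1)) (hδ0 _) (hδ1 _) (p.1.1+1)).choose)})),
          by haveI := p.2; exact inferInstance⟩) k
  let s : ℕ → ℕ := fun k => (T k).1.1
  let Vm : ℕ → Submodule ℝ (StrongDual ℝ (StrongDual ℝ X)) := fun k =>
    Nat.rec (Submodule.span ℝ {β}) (fun m _ => (T m).1.2) k
  have hVmsucc : ∀ k, Vm (k+1) = Vm k ⊔ (Submodule.span ℝ {e (s k)}) := by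
    intro k
    cases k with
    | zero => rfl
    | succ m => rfl
  have hstepAll : ∀ k, ∀ v ∈ Vm k, ∀ t : ℝ, ‖v‖ ≤ (1 + δs k) * ‖v + t • e (s k)‖ := by
    intro k
    cases k with
    | zero =>
      exact (hstep (Submodule.span ℝ {β}) inferInstance (δs 0) (hδ0 0) (hδ1 0) 0).choose_spec.2
    | succ m =>
      exact (hstep (T m).1.2 (T m).2 (δs (m+1)) (hδ0 _) (hδ1 _) ((T m).1.1+1)).choose_spec.2
  have hslt : ∀ k, s k < s (k+1) := by
    intro k
    have h1 := (hstep (T k).1.2 (T k).2 (δs (k+1)) (hδ0 _) (hδ1 _) ((T k).1.1+1)).choose_spec.1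
    exact Nat.lt_of_succ_le h1
  have hsmono : StrictMono s := strictMono_nat_of_lt_succ hslt
  have hβVm : ∀ k, β ∈ Vm k := by
    intro k
    induction k with
    | zero => exact Submodule.mem_span_singleton_self β
    | succ m ih =>
      rw [hVmsucc m]
      exact Submodule.mem_sup_left ih
  have hEVm : ∀ i k, i < k → e (s i) ∈ Vm k := by
    intro i k
    induction k with
    | zero => omega
    | succ m ih =>
      intro hik
      rw [hVmsucc m]
      rcases Nat.lt_succ_iff_lt_or_eq.1 hik with h | h
      · exact Submodule.mem_sup_left (ih h)
      · subst h
        exact Submodule.mem_sup_right (Submodule.mem_span_singleton_self _)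
  have hchain : ∀ (a : ℝ) (cf : ℕ → ℝ) (k n : ℕ), k ≤ n →
      ‖a • β + ∑ j ∈ Finset.range k, cf j • e (s j)‖ ≤
        (∏ m ∈ Finset.Ico k n, (1 + δs m)) * ‖a • β + ∑ j ∈ Finset.range n, cf j • e (s j)‖ := by
    intro a cf k n hkn
    induction n, hkn using Nat.le_induction with
    | base => simp
    | succ n hkn ih =>
      have hy : (a • β + ∑ j ∈ Finset.range n, cf j • e (s j)) ∈ Vm n :=
        Submodule.add_mem _ (Submodule.smul_mem _ _ (hβVm n))
          (Submodule.sum_mem _ fun j hj =>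
            Submodule.smul_mem _ _ (hEVm j n (Finset.mem_range.1 hj)))
      have h1 := hstepAll n _ hy (cf n)
      have hprodnn : (0:ℝ) ≤ ∏ m ∈ Finset.Ico k n, (1 + δs m) :=
        Finset.prod_nonneg fun m _ => by linarith [hδ0 m]
      rw [Finset.prod_Ico_succ_top hkn, Finset.sum_range_succ, ← add_assoc]
      calc ‖a • β + ∑ j ∈ Finset.range k, cf j • e (s j)‖
          ≤ (∏ m ∈ Finset.Ico k n, (1 + δs m)) *
              ‖a • β + ∑ j ∈ Finset.range n, cf j • e (s j)‖ := ih
        _ ≤ (∏ m ∈ Finset.Ico k n, (1 + δs m)) *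
            ((1 + δs n) * ‖(a • β + ∑ j ∈ Finset.range n, cf j • e (s j)) + cf n • e (s n)‖) :=
            mul_le_mul_of_nonneg_left h1 hprodnn
        _ = _ := by ring
  have hprodle : ∀ k n : ℕ, (∏ m ∈ Finset.Ico k n, (1 + δs m)) ≤ 1 + 2*c := by
    intro k n
    rcases le_or_gt k n with h | h
    · have h1 := wideS_prod_bound hc0.le hc2 k n h
      have h2 : (1/2:ℝ)^k ≤ 1 := pow_le_one₀ (by norm_num) (by norm_num)
      have h3 : (0:ℝ) < (1/2:ℝ)^n := by positivity
      calc (∏ m ∈ Finset.Ico k n, (1 + δs m))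
          ≤ 1 + 2*c*((1/2:ℝ)^k - (1/2:ℝ)^n) := h1
        _ ≤ 1 + 2*c := by nlinarith
    · rw [Finset.Ico_eq_empty (by omega), Finset.prod_empty]
      linarith
  have hJb : ∀ jj : ℕ, (J (b jj) : StrongDual ℝ (StrongDual ℝ X)) = β + e jj := by
    intro jj
    show (J (b jj) : StrongDual ℝ (StrongDual ℝ X)) = β + (J (b jj) - β)
    abel
  have hJsum : ∀ (cf : ℕ → ℝ) (k : ℕ),
      (J (∑ j ∈ Finset.range k, cf j • b (s j)) : StrongDual ℝ (StrongDual ℝ X)) =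
        (∑ j ∈ Finset.range k, cf j) • β + ∑ j ∈ Finset.range k, cf j • e (s j) := by
    intro cf k
    rw [map_sum]
    calc ∑ j ∈ Finset.range k, (J (cf j • b (s j)) : StrongDual ℝ (StrongDual ℝ X))
        = ∑ j ∈ Finset.range k, (cf j • β + cf j • e (s j)) := by
          refine Finset.sum_congr rfl fun j _ => ?_
          rw [map_smul, hJb (s j), smul_add]
      _ = (∑ j ∈ Finset.range k, cf j) • β + ∑ j ∈ Finset.range k, cf j • e (s j) := by
          rw [Finset.sum_add_distrib, Finset.sum_smul]
  have hfx : ∀ (cf : ℕ → ℝ) (k n : ℕ), k ≤ n →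
      f (s k) (∑ j ∈ Finset.range n, cf j • b (s j)) = ∑ j ∈ Finset.Ico k n, cf j := by
    intro cf k n hkn
    rw [map_sum]
    simp only [map_smul, smul_eq_mul]
    rw [Finset.range_eq_Ico, ← Finset.sum_Ico_consecutive _ (Nat.zero_le k) hkn]
    have h1 : ∑ j ∈ Finset.Ico 0 k, cf j * f (s k) (b (s j)) = 0 :=
      Finset.sum_eq_zero fun j hj => by
        rw [hf0 (s k) (s j) (hsmono (Finset.mem_Ico.1 hj).2), mul_zero]
    have h2 : ∑ j ∈ Finset.Ico k n, cf j * f (s k) (b (s j)) = ∑ j ∈ Finset.Ico k n, cf j :=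
      Finset.sum_congr rfl fun j hj => by
        rw [hf1 (s k) (s j) (hsmono.monotone (Finset.mem_Ico.1 hj).1), mul_one]
    rw [h1, h2, zero_add]
  have hSk : ∀ (cf : ℕ → ℝ) (k n : ℕ), k ≤ n →
      |∑ j ∈ Finset.Ico k n, cf j| ≤ lam * ‖∑ j ∈ Finset.range n, cf j • b (s j)‖ := by
    intro cf k n hkn
    rw [← hfx cf k n hkn]
    have h1 := (f (s k)).le_opNorm (∑ j ∈ Finset.range n, cf j • b (s j))
    rw [Real.norm_eq_abs] at h1
    have h2 : ‖f (s k)‖ ≤ lam := hfn _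
    nlinarith [norm_nonneg (∑ j ∈ Finset.range n, cf j • b (s j))]
  have hlamμ : lam ≤ (lam^2+1)/2 + ε := by nlinarith [sq_nonneg (lam - 1)]
  refine ⟨s, hsmono, ?_, ?_, ?_⟩
  · -- basic with constant 2μ
    intro cf k n hkn
    show ‖∑ j ∈ Finset.range k, cf j • b (s j)‖ ≤
      2 * ((lam ^ 2 + 1) / 2 + ε) * ‖∑ j ∈ Finset.range n, cf j • b (s j)‖
    have hnx : ‖(J (∑ j ∈ Finset.range n, cf j • b (s j)) : StrongDual ℝ (StrongDual ℝ X))‖ =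
        ‖∑ j ∈ Finset.range n, cf j • b (s j)‖ := J.norm_map _
    have hnP : ‖(J (∑ j ∈ Finset.range k, cf j • b (s j)) : StrongDual ℝ (StrongDual ℝ X))‖ =
        ‖∑ j ∈ Finset.range k, cf j • b (s j)‖ := J.norm_map _
    have hdec : (J (∑ j ∈ Finset.range k, cf j • b (s j)) : StrongDual ℝ (StrongDual ℝ X)) =
        ((∑ j ∈ Finset.range n, cf j) • β + ∑ j ∈ Finset.range k, cf j • e (s j))
          - (∑ j ∈ Finset.Ico k n, cf j) • β := by
      rw [hJsum]
      have hsplit : (∑ j ∈ Finset.range k, cf j) + ∑ j ∈ Finset.Ico k n, cf j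
          = ∑ j ∈ Finset.range n, cf j := Finset.sum_range_add_sum_Ico _ hkn
      rw [← hsplit, add_smul]
      abel
    have h5 := hchain (∑ j ∈ Finset.range n, cf j) cf k n hkn
    have h6 : ‖(∑ j ∈ Finset.range n, cf j) • β + ∑ j ∈ Finset.range n, cf j • e (s j)‖ =
        ‖∑ j ∈ Finset.range n, cf j • b (s j)‖ := by
      rw [← hJsum]
      exact hnx
    have h7 := hprodle k n
    have h8 : ‖(∑ j ∈ Finset.range n, cf j) • β + ∑ j ∈ Finset.range k, cf j • e (s j)‖
        ≤ (1 + 2*c) * ‖∑ j ∈ Finset.range n, cf j • b (s j)‖ := by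
      rw [← h6]
      calc ‖(∑ j ∈ Finset.range n, cf j) • β + ∑ j ∈ Finset.range k, cf j • e (s j)‖
          ≤ (∏ m ∈ Finset.Ico k n, (1 + δs m)) *
            ‖(∑ j ∈ Finset.range n, cf j) • β + ∑ j ∈ Finset.range n, cf j • e (s j)‖ := h5
        _ ≤ (1 + 2*c) *
            ‖(∑ j ∈ Finset.range n, cf j) • β + ∑ j ∈ Finset.range n, cf j • e (s j)‖ :=
            mul_le_mul_of_nonneg_right h7 (norm_nonneg _)
    have h9 : ‖(∑ j ∈ Finset.Ico k n, cf j) • β‖ ≤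
        (lam * ‖∑ j ∈ Finset.range n, cf j • b (s j)‖) * lam := by
      rw [norm_smul, Real.norm_eq_abs]
      exact mul_le_mul (hSk cf k n hkn) hβnorm (norm_nonneg β) (by positivity)
    have h10 : ‖∑ j ∈ Finset.range k, cf j • b (s j)‖ ≤
        (1 + 2*c) * ‖∑ j ∈ Finset.range n, cf j • b (s j)‖ +
          (lam * ‖∑ j ∈ Finset.range n, cf j • b (s j)‖) * lam := by
      rw [← hnP, hdec]
      calc ‖((∑ j ∈ Finset.range n, cf j) • β + ∑ j ∈ Finset.range k, cf j • e (s j))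
            - (∑ j ∈ Finset.Ico k n, cf j) • β‖
          ≤ ‖(∑ j ∈ Finset.range n, cf j) • β + ∑ j ∈ Finset.range k, cf j • e (s j)‖ +
            ‖(∑ j ∈ Finset.Ico k n, cf j) • β‖ := norm_sub_le _ _
        _ ≤ _ := add_le_add h8 h9
    have hxnn : (0:ℝ) ≤ ‖∑ j ∈ Finset.range n, cf j • b (s j)‖ := norm_nonneg _
    nlinarith [mul_le_mul_of_nonneg_right hcε hxnn]
  · -- norm bound
    intro j
    show ‖b (s j)‖ ≤ (lam ^ 2 + 1) / 2 + ε
    exact le_trans (hbn _) hlamμ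
  · -- the summing condition
    intro cf k n hkn
    show |∑ j ∈ Finset.Ico k n, cf j| ≤
      ((lam ^ 2 + 1) / 2 + ε) * ‖∑ j ∈ Finset.range n, cf j • b (s j)‖
    calc |∑ j ∈ Finset.Ico k n, cf j|
        ≤ lam * ‖∑ j ∈ Finset.range n, cf j • b (s j)‖ := hSk cf k n hkn
      _ ≤ ((lam ^ 2 + 1) / 2 + ε) * ‖∑ j ∈ Finset.range n, cf j • b (s j)‖ :=
          mul_le_mul_of_nonneg_right hlamμ (norm_nonneg _)
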